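/- Assume r, s are positive integers with r + s = n odd, and let (a,b) be a pair of positive integers with a+b=n in the orbit of (r,s). Then (s,r) is in the orbit of (r,s) (i.e., (r,s) flips) if and only if there exists k ≥ 0 with 2^k · r ≡ −r (mod n). -/
import Mathlib


/-- One application of an alternative-law map on pairs of positive integers:
`α(r,s) = (2r, s-r)` for `s > r`, `β(r,s) = (r-s, 2s)` for `r > s`,
`γ(r,s) = (r/2, s + r/2)` for `r` even, `δ(r,s) = (r + s/2, s/2)` for `s` even. -/
def AltStep (p q : ℕ × ℕ) : Prop :=
  (p.1 < p.2 ∧ q = (2 * p.1, p.2 - p.1)) ∨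
  (p.2 < p.1 ∧ q = (p.1 - p.2, 2 * p.2)) ∨
  (∃ t, p.1 = 2 * t ∧ q = (t, p.2 + t)) ∨
  (∃ t, p.2 = 2 * t ∧ q = (p.1 + t, t))

/-- `q` belongs to the orbit `O(p)`. -/
def InOrbit (p q : ℕ × ℕ) : Prop := Relation.ReflTransGen AltStep p q

lemma orbit_invariant {r s n : ℕ} (hr : 0 < r) (hs : 0 < s) (hn : n = r + s) :
    ∀ q, InOrbit (r, s) q → q.1 + q.2 = n ∧ 0 < q.1 ∧ 0 < q.2 ∧
      ∃ j k : ℕ, (2 : ZMod n) ^ j * (q.1 : ZMod n) = 2 ^ k * (r : ZMod n) := by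
  intro q h
  induction h with
  | refl =>
    refine ⟨hn.symm, hr, hs, 0, 0, rfl⟩
  | tail _ hstep ih =>
    rename_i b c _
    obtain ⟨hsum, hb1, hb2, j, k, hjk⟩ := ih
    obtain ⟨b1, b2⟩ := b
    simp only at hsum hb1 hb2 hjk
    have hneg : (b2 : ZMod n) = -(b1 : ZMod n) := by
      have h0 : ((b1 + b2 : ℕ) : ZMod n) = ((n : ℕ) : ZMod n) := by rw [hsum]
      rw [ZMod.natCast_self] at h0
      push_cast at h0
      linear_combination h0
    rcases hstep with ⟨hlt, hq⟩ | ⟨hlt, hq⟩ | ⟨t, hb, hq⟩ | ⟨t, hb, hq⟩ <;> subst hq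
    · refine ⟨by simp; omega, by simp; omega, by simp; omega, j, k + 1, ?_⟩
      simp only
      push_cast
      linear_combination 2 * hjk
    · refine ⟨by simp; omega, by simp; omega, by simp; omega, j, k + 1, ?_⟩
      simp only
      rw [Nat.cast_sub hlt.le]
      linear_combination 2 * hjk - (2 : ZMod n) ^ j * hneg
    · simp only at hb
      refine ⟨by simp; omega, by simp; omega, by simp; omega, j + 1, k, ?_⟩
      simp only
      have : ((b1 : ℕ) : ZMod n) = 2 * t := by rw [hb]; push_cast; ring
      rw [this] at hjk
      linear_combination hjk
    · simp only at hb
      refine ⟨by simp; omega, by simp; omega, by simp; omega, j + 1, k, ?_⟩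
      simp only
      have ht : ((b2 : ℕ) : ZMod n) = 2 * t := by rw [hb]; push_cast; ring
      rw [ht] at hneg
      push_cast
      linear_combination hjk + (2 : ZMod n) ^ j * hneg

lemma step_double {n a : ℕ} (hodd : Odd n) (ha : 0 < a) (han : a < n) :
    AltStep (a, n - a) ((2 * a) % n, n - (2 * a) % n) := by
  rcases lt_trichotomy (2 * a) n with h | h | h
  · left
    constructor
    · simp; omega
    · have : (2 * a) % n = 2 * a := Nat.mod_eq_of_lt h
      rw [this]
      simp; omega
  · exfalso; exact (Nat.not_odd_iff_even.mpr ⟨a, by omega⟩) (h ▸ hodd)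
  · right; left
    have hmod : (2 * a) % n = 2 * a - n := by
      rw [Nat.mod_eq_sub_mod (by omega), Nat.mod_eq_of_lt (by omega)]
    constructor
    · simp; omega
    · rw [hmod]
      have : a - (n - a) = 2 * a - n := by omega
      simp only [Prod.mk.injEq]
      omega

lemma pow_mod_pos {r n : ℕ} (hr : 0 < r) (hrn : r < n) (hodd : Odd n) (k : ℕ) :
    0 < (2 ^ k * r) % n := by
  rcases Nat.eq_zero_or_pos ((2 ^ k * r) % n) with h | h
  swap
  · exact h
  · exfalso
    have hdvd : n ∣ 2 ^ k * r := Nat.dvd_of_mod_eq_zero h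
    have hcop : Nat.Coprime n (2 ^ k) := by
      apply Nat.Coprime.pow_right
      exact hodd.coprime_two_right
    have : n ∣ r := hcop.dvd_of_dvd_mul_left hdvd
    exact absurd (Nat.le_of_dvd hr this) (by omega)

lemma orbit_pow {r s n : ℕ} (hr : 0 < r) (hs : 0 < s) (hn : n = r + s) (hodd : Odd n) :
    ∀ k : ℕ, InOrbit (r, s) ((2 ^ k * r) % n, n - (2 ^ k * r) % n) := by
  intro k
  induction k with
  | zero =>
    have h1 : (2 ^ 0 * r) % n = r := by
      rw [pow_zero, one_mul, Nat.mod_eq_of_lt (by omega)]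
    rw [h1]
    have : n - r = s := by omega
    rw [this]
    exact Relation.ReflTransGen.refl
  | succ k ih =>
    apply Relation.ReflTransGen.tail ih
    have hpos : 0 < (2 ^ k * r) % n := pow_mod_pos hr (by omega) hodd k
    have hlt : (2 ^ k * r) % n < n := Nat.mod_lt _ (by omega)
    have hstep := step_double hodd hpos hlt
    have hmm : (2 * ((2 ^ k * r) % n)) % n = (2 ^ (k + 1) * r) % n := by
      have := (Nat.mod_modEq (2 ^ k * r) n).mul_left 2
      unfold Nat.ModEq at this
      rw [this]
      ring_nf
    rwa [hmm] at hstep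

theorem flips_iff_congruence (r s n : ℕ) (hr : 0 < r) (hs : 0 < s)
    (hn : n = r + s) (hodd : Odd n) :
    InOrbit (r, s) (s, r) ↔ ∃ k : ℕ, (2 ^ k * r : ℤ) ≡ -(r : ℤ) [ZMOD (n : ℤ)] := by
  haveI : NeZero n := ⟨by omega⟩
  have hn3 : 3 ≤ n := by
    rcases hodd with ⟨m, hm⟩; omega
  constructor
  · intro h
    obtain ⟨-, -, -, j, k, hjk⟩ := orbit_invariant hr hs hn _ h
    simp only at hjk
    have hsZ : (s : ZMod n) = -(r : ZMod n) := by
      have h0 : ((r + s : ℕ) : ZMod n) = ((n : ℕ) : ZMod n) := by rw [hn]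
      rw [ZMod.natCast_self] at h0
      push_cast at h0
      linear_combination h0
    have hunit : IsUnit (2 : ZMod n) := by
      rw [show (2 : ZMod n) = ((2 : ℕ) : ZMod n) by push_cast; ring]
      rw [ZMod.isUnit_iff_coprime]
      exact (Nat.coprime_comm.mpr hodd.coprime_two_right)
    have htot : (2 : ZMod n) ^ Nat.totient n = 1 := by
      have h1 : ((hunit.unit : (ZMod n)ˣ) : ZMod n) ^ Nat.totient n = 1 := by
        rw [← Units.val_pow_eq_pow_val, ZMod.pow_totient, Units.val_one]
      rwa [IsUnit.unit_spec] at h1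
    have hphi : 1 ≤ Nat.totient n := Nat.totient_pos.mpr (by omega)
    have hle : j ≤ j * Nat.totient n := Nat.le_mul_of_pos_right j hphi
    have hj' : j * (Nat.totient n - 1) + j = j * Nat.totient n := by
      rw [Nat.mul_sub, mul_one]; omega
    refine ⟨k + j * (Nat.totient n - 1), ?_⟩
    rw [← ZMod.intCast_eq_intCast_iff]
    push_cast
    have hneg : (2 : ZMod n) ^ k * (r : ZMod n) = -((2 : ZMod n) ^ j * r) := by
      rw [← hjk, hsZ]; ring
    calc (2 : ZMod n) ^ (k + j * (Nat.totient n - 1)) * r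
        = (2 : ZMod n) ^ (j * (Nat.totient n - 1)) * ((2 : ZMod n) ^ k * r) := by
          rw [pow_add]; ring
      _ = (2 : ZMod n) ^ (j * (Nat.totient n - 1)) * -((2 : ZMod n) ^ j * r) := by rw [hneg]
      _ = -((2 : ZMod n) ^ (j * (Nat.totient n - 1) + j) * r) := by rw [pow_add]; ring
      _ = -((2 : ZMod n) ^ (j * Nat.totient n) * r) := by rw [hj']
      _ = -(r : ZMod n) := by rw [mul_comm j, pow_mul, htot, one_pow, one_mul]
  · rintro ⟨k, hk⟩
    have hmod : ((2 ^ k * r) % n : ℕ) = s := by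
      have h1 : (-(r : ℤ)) ≡ (s : ℤ) [ZMOD (n : ℤ)] := by
        rw [Int.modEq_iff_dvd]
        have : ((s : ℤ)) - -(r : ℤ) = n := by push_cast; omega
        rw [this]
      have h2 : ((2 ^ k * r : ℕ) : ℤ) ≡ (s : ℤ) [ZMOD (n : ℤ)] := by
        push_cast
        exact hk.trans h1
      have h3 : ((2 ^ k * r : ℕ) : ℤ) % n = (s : ℤ) % n := h2
      have h4 : ((s : ℤ)) % n = s := Int.emod_eq_of_lt (by positivity) (by omega)
      have h5 : (((2 ^ k * r) % n : ℕ) : ℤ) = ((2 ^ k * r : ℕ) : ℤ) % n := by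
        exact Int.natCast_mod _ _
      have : (((2 ^ k * r) % n : ℕ) : ℤ) = (s : ℤ) := by rw [h5, h3, h4]
      exact_mod_cast this
    have := orbit_pow hr hs hn hodd k
    rw [hmod] at this
    have hns : n - s = r := by omega
    rwa [hns] at this
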